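/- arXiv:2410.20448 — 11 statements merged into one kernel-verified Lean document; each statement's English description precedes it below -/
import Mathlib

section
/- Let T₁ and T₂ be two cutters defined on a real Hilbert space Y. If there exists x ∈ Fix(T₁ ∘ T₂) with x ∉ Fix(T₂), then Fix(T₁) ∩ Fix(T₂) = ∅. -/
open scoped RealInnerProductSpace

theorem stmt_3 {Y : Type*} [NormedAddCommGroup Y] [InnerProductSpace ℝ Y]
    (T₁ T₂ : Y → Y)
    (hfix₁ : ∃ q, T₁ q = q) (hfix₂ : ∃ q, T₂ q = q)
    (hcut₁ : ∀ q, T₁ q = q → ∀ x, ⟪x - T₁ x, q - T₁ x⟫ ≤ 0)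
    (hcut₂ : ∀ q, T₂ q = q → ∀ x, ⟪x - T₂ x, q - T₂ x⟫ ≤ 0)
    (x : Y) (hx : T₁ (T₂ x) = x) (hx2 : T₂ x ≠ x) :
    {q | T₁ q = q} ∩ {q | T₂ q = q} = ∅ := by
  ext q
  simp only [Set.mem_inter_iff, Set.mem_setOf_eq, Set.mem_empty_iff_false, iff_false]
  rintro ⟨hq1, hq2⟩
  have h1 := hcut₁ q hq1 (T₂ x)
  rw [hx] at h1
  have h2 := hcut₂ q hq2 x
  have hsum : ⟪T₂ x - x, T₂ x - x⟫ ≤ 0 := by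
    have : ⟪T₂ x - x, T₂ x - x⟫ = ⟪T₂ x - x, q - x⟫ + ⟪x - T₂ x, q - T₂ x⟫ := by
      rw [show x - T₂ x = -(T₂ x - x) by abel, show q - T₂ x = (q - x) - (T₂ x - x) by abel]
      simp only [inner_neg_left, inner_sub_right]
      ring
    linarith
  have := real_inner_self_nonpos.mp hsum
  exact hx2 (by rwa [sub_eq_zero] at this)
end

section
/- Let T₁,…,T_m be cutters on a real Hilbert space X with fixed point sets F₁,…,F_m such that ∩ᵢ Fᵢ ≠ ∅, and let w be a positive weight function on {1,…,m}. If x ∈ X satisfies x ∉ ∩ᵢ Fᵢ, then T_w(x) ≠ x, where T_w(x) := Σᵢ w(i)Tᵢ(x). -/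
open scoped RealInnerProductSpace

theorem stmt_5 {X : Type*} [NormedAddCommGroup X] [InnerProductSpace ℝ X]
    (m : ℕ) (T : Fin m → X → X)
    (hcut : ∀ i, ∀ q, T i q = q → ∀ x, ⟪x - T i x, q - T i x⟫ ≤ 0)
    (hF : ∃ q, ∀ i, T i q = q)
    (w : Fin m → ℝ) (hw0 : ∀ i, 0 < w i) (hw1' : ∀ i, w i ≤ 1) (hw1 : ∑ i, w i = 1)
    (x : X) (hx : ∃ i, T i x ≠ x) :
    (∑ i, w i • T i x) ≠ x := by
  obtain ⟨q, hq⟩ := hF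
  obtain ⟨i0, hi0⟩ := hx
  intro h
  have hsum : ∑ i, w i • (x - T i x) = 0 := by
    simp [smul_sub, Finset.sum_sub_distrib, ← Finset.sum_smul, hw1, h]
  have key : ∀ i, ⟪x - T i x, q - x⟫ + ‖x - T i x‖^2 ≤ 0 := by
    intro i
    have h1 := hcut i q (hq i) x
    have h2 : ⟪x - T i x, (q - x) + (x - T i x)⟫ ≤ 0 := by
      rwa [show (q - x) + (x - T i x) = q - T i x by abel]
    have := h2
    rw [inner_add_right, real_inner_self_eq_norm_sq] at this
    linarith
  have hsum2 : ∑ i, w i * ‖x - T i x‖^2 ≤ 0 := by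
    have h1 : ∑ i, w i * (⟪x - T i x, q - x⟫ + ‖x - T i x‖^2) ≤ 0 :=
      Finset.sum_nonpos fun i _ => mul_nonpos_of_nonneg_of_nonpos (hw0 i).le (key i)
    have h2 : ∑ i, w i * ⟪x - T i x, q - x⟫ = 0 := by
      have h3 : ⟪∑ i, w i • (x - T i x), q - x⟫ = (0:ℝ) := by rw [hsum]; simp
      rw [sum_inner] at h3
      simpa [real_inner_smul_left] using h3
    calc ∑ i, w i * ‖x - T i x‖^2
        = ∑ i, w i * (⟪x - T i x, q - x⟫ + ‖x - T i x‖^2)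
          - ∑ i, w i * ⟪x - T i x, q - x⟫ := by
          rw [← Finset.sum_sub_distrib]; congr 1; ext i; ring
      _ ≤ 0 := by rw [h2]; simpa using h1
  have hz : ∀ i ∈ Finset.univ, 0 ≤ w i * ‖x - T i x‖^2 :=
    fun i _ => mul_nonneg (hw0 i).le (sq_nonneg _)
  have hzero := (Finset.sum_eq_zero_iff_of_nonneg hz).mp
    (le_antisymm hsum2 (Finset.sum_nonneg hz))
  have h4 : w i0 * ‖x - T i0 x‖^2 = 0 := hzero i0 (Finset.mem_univ i0)
  have h5 : ‖x - T i0 x‖^2 = 0 := by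
    rcases mul_eq_zero.mp h4 with h | h
    · exact absurd h (hw0 i0).ne'
    · exact h
  apply hi0
  have h6 : x - T i0 x = 0 := by
    rwa [pow_eq_zero_iff (by norm_num), norm_eq_zero] at h5
  rw [sub_eq_zero] at h6
  exact h6.symm
end

section
/- Let T₁,…,T_m be cutters on a real Hilbert space X with fixed point sets F₁,…,F_m such that ∩ᵢ Fᵢ ≠ ∅, and let w: {1,…,m} → [0,1] be a weight function. Then for every x ∈ X, T_w(x) = x if and only if Tᵢ(x) = x for every index i with w(i) > 0. Equivalently, Fix(T_w) = ∩_{i: w(i)>0} Fix(Tᵢ). -/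
open scoped RealInnerProductSpace

theorem stmt_6 {X : Type*} [NormedAddCommGroup X] [InnerProductSpace ℝ X]
    (m : ℕ) (T : Fin m → X → X)
    (hcut : ∀ i, ∀ q, T i q = q → ∀ x, ⟪x - T i x, q - T i x⟫ ≤ 0)
    (hF : ∃ q, ∀ i, T i q = q)
    (w : Fin m → ℝ) (hw0 : ∀ i, 0 ≤ w i) (hw1' : ∀ i, w i ≤ 1) (hw1 : ∑ i, w i = 1) :
    (∀ x : X, (∑ i, w i • T i x) = x ↔ ∀ i, 0 < w i → T i x = x) ∧
    {x | (∑ i, w i • T i x) = x} = ⋂ i ∈ {i | 0 < w i}, {x | T i x = x} := by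
  have key : ∀ x : X, (∑ i, w i • T i x) = x ↔ ∀ i, 0 < w i → T i x = x := by
    intro x
    constructor
    · intro hx i hi
      obtain ⟨q, hq⟩ := hF
      have h1 : ∀ j, ‖x - T j x‖ ^ 2 + ⟪x - T j x, q - x⟫ ≤ 0 := by
        intro j
        have h := hcut j q (hq j) x
        have h2 : ⟪x - T j x, (x - T j x) + (q - x)⟫ ≤ 0 := by
          rw [show (x - T j x) + (q - x) = q - T j x by abel]; exact h
        rw [inner_add_right, real_inner_self_eq_norm_sq] at h2
        linarith
      have hzero : ∑ j, w j • (x - T j x) = (0 : X) := by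
        have : ∑ j, w j • (x - T j x) = (∑ j, w j) • x - ∑ j, w j • T j x := by
          rw [Finset.sum_smul]
          rw [← Finset.sum_sub_distrib]
          exact Finset.sum_congr rfl fun j _ => smul_sub _ _ _
        rw [this, hw1, one_smul, hx, sub_self]
      have hsum : ∑ j, w j * ⟪x - T j x, q - x⟫ = 0 := by
        have : ∑ j, w j * ⟪x - T j x, q - x⟫ = ⟪∑ j, w j • (x - T j x), q - x⟫ := by
          rw [sum_inner]
          exact Finset.sum_congr rfl fun j _ => (real_inner_smul_left _ _ _).symm
        rw [this, hzero, inner_zero_left]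
      have hle : ∑ j, w j * ‖x - T j x‖ ^ 2 ≤ 0 := by
        have h3 : ∑ j, w j * (‖x - T j x‖ ^ 2 + ⟪x - T j x, q - x⟫) ≤ 0 := by
          apply Finset.sum_nonpos
          intro j _
          exact mul_nonpos_of_nonneg_of_nonpos (hw0 j) (h1 j)
        have h4 : ∑ j, w j * (‖x - T j x‖ ^ 2 + ⟪x - T j x, q - x⟫)
            = ∑ j, w j * ‖x - T j x‖ ^ 2 + ∑ j, w j * ⟪x - T j x, q - x⟫ := by
          rw [← Finset.sum_add_distrib]
          exact Finset.sum_congr rfl fun j _ => mul_add _ _ _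
        rw [h4, hsum, add_zero] at h3
        exact h3
      have hnn : ∀ j ∈ Finset.univ, 0 ≤ w j * ‖x - T j x‖ ^ 2 :=
        fun j _ => mul_nonneg (hw0 j) (sq_nonneg _)
      have heq : ∑ j, w j * ‖x - T j x‖ ^ 2 = 0 :=
        le_antisymm hle (Finset.sum_nonneg hnn)
      have := (Finset.sum_eq_zero_iff_of_nonneg hnn).1 heq i (Finset.mem_univ i)
      have hnorm : ‖x - T i x‖ ^ 2 = 0 := by
        rcases mul_eq_zero.1 this with h | h
        · exact absurd h (ne_of_gt hi)
        · exact h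
      have : x - T i x = 0 := by
        rw [pow_eq_zero_iff (by norm_num)] at hnorm
        exact norm_eq_zero.1 hnorm
      exact (sub_eq_zero.1 this).symm
    · intro h
      have : ∑ i, w i • T i x = ∑ i, w i • x := by
        apply Finset.sum_congr rfl
        intro i _
        rcases eq_or_lt_of_le (hw0 i) with h0 | h0
        · rw [← h0, zero_smul, zero_smul]
        · rw [h i h0]
      rw [this, ← Finset.sum_smul, hw1, one_smul]
  refine ⟨key, ?_⟩
  ext x
  simp only [Set.mem_setOf_eq, Set.mem_iInter, key x]
end

section
/- Let T₁,…,T_m be cutters on a real Hilbert space X with F := ∩ᵢ Fix(Tᵢ) ≠ ∅, let w be a positive weight function, and let x ∈ X \ F. With λ̂ := (Σᵢ w(i)‖Tᵢ(x) − x‖²)/‖Σᵢ w(i)(Tᵢ(x) − x)‖² and T_{w,λ}(x) := x + λ(T_w(x) − x), the inclusions F ⊆ H(x, T_{w,λ̂}(x)) ⊆ H(x, T_w(x)) hold. -/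
open scoped RealInnerProductSpace

theorem stmt_8 {X : Type*} [NormedAddCommGroup X] [InnerProductSpace ℝ X]
    (m : ℕ) (T : Fin m → X → X)
    (hcut : ∀ i, ∀ q, T i q = q → ∀ x, ⟪x - T i x, q - T i x⟫ ≤ 0)
    (hF : ∃ q, ∀ i, T i q = q)
    (w : Fin m → ℝ) (hw0 : ∀ i, 0 < w i) (hw1' : ∀ i, w i ≤ 1) (hw1 : ∑ i, w i = 1)
    (x : X) (hx : ∃ i, T i x ≠ x) :
    ({q | ∀ i, T i q = q} ⊆
      {u | ⟪x - (x + ((∑ i, w i * ‖T i x - x‖ ^ 2) / ‖∑ i, w i • (T i x - x)‖ ^ 2) •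
              ((∑ i, w i • T i x) - x)),
            u - (x + ((∑ i, w i * ‖T i x - x‖ ^ 2) / ‖∑ i, w i • (T i x - x)‖ ^ 2) •
              ((∑ i, w i • T i x) - x))⟫ ≤ 0}) ∧
    ({u | ⟪x - (x + ((∑ i, w i * ‖T i x - x‖ ^ 2) / ‖∑ i, w i • (T i x - x)‖ ^ 2) •
              ((∑ i, w i • T i x) - x)),
            u - (x + ((∑ i, w i * ‖T i x - x‖ ^ 2) / ‖∑ i, w i • (T i x - x)‖ ^ 2) •
              ((∑ i, w i • T i x) - x))⟫ ≤ 0} ⊆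
      {u | ⟪x - (∑ i, w i • T i x), u - (∑ i, w i • T i x)⟫ ≤ 0}) := by
  obtain ⟨q0, hq0⟩ := hF
  obtain ⟨i0, hi0⟩ := hx
  set d : Fin m → X := fun i => T i x - x with hd
  set D : X := ∑ i, w i • d i with hD
  have hDeq : (∑ i, w i • T i x) - x = D := by
    rw [hD]
    simp only [hd, smul_sub, Finset.sum_sub_distrib, ← Finset.sum_smul, hw1, one_smul]
  -- key cutter inequality
  have key : ∀ q, (∀ i, T i q = q) → ∀ i, ‖d i‖ ^ 2 ≤ ⟪d i, q - x⟫ := by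
    intro q hq i
    have h := hcut i q (hq i) x
    have e1 : x - T i x = -(d i) := by simp [hd]
    have e2 : q - T i x = (q - x) - d i := by simp [hd]
    rw [e1, e2, inner_neg_left, inner_sub_right, real_inner_self_eq_norm_sq] at h
    linarith
  have hDinner : ∀ q, ⟪D, q - x⟫ = ∑ i, w i * ⟪d i, q - x⟫ := by
    intro q
    rw [hD, sum_inner]
    exact Finset.sum_congr rfl fun i _ => real_inner_smul_left _ _ _
  have hsum_le : ∀ q, (∀ i, T i q = q) → (∑ i, w i * ‖d i‖ ^ 2) ≤ ⟪D, q - x⟫ := by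
    intro q hq
    rw [hDinner q]
    exact Finset.sum_le_sum fun i _ =>
      mul_le_mul_of_nonneg_left (key q hq i) (hw0 i).le
  have hnum_pos : 0 < ∑ i, w i * ‖d i‖ ^ 2 := by
    apply Finset.sum_pos' (fun i _ => mul_nonneg (hw0 i).le (by positivity))
    refine ⟨i0, Finset.mem_univ _, ?_⟩
    have hne : d i0 ≠ 0 := by simp [hd, sub_eq_zero, hi0]
    exact mul_pos (hw0 i0) (pow_pos (norm_pos_iff.mpr hne) 2)
  have hDne : D ≠ 0 := by
    intro h
    have := hsum_le q0 hq0
    rw [h, inner_zero_left] at this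
    linarith
  have hDpos : 0 < ‖D‖ ^ 2 := pow_pos (norm_pos_iff.mpr hDne) 2
  -- convexity: ‖D‖² ≤ ∑ w i ‖d i‖²
  have hconv : ‖D‖ ^ 2 ≤ ∑ i, w i * ‖d i‖ ^ 2 := by
    have h1 : ‖D‖ ^ 2 ≤ (∑ i, w i * ‖d i‖) * ‖D‖ := by
      have : ⟪D, D⟫ = ∑ i, w i * ⟪d i, D⟫ := by
        rw [hD, sum_inner]
        exact Finset.sum_congr rfl fun i _ => real_inner_smul_left _ _ _
      rw [← real_inner_self_eq_norm_sq, this, Finset.sum_mul]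
      refine Finset.sum_le_sum fun i _ => ?_
      rw [mul_assoc]
      exact mul_le_mul_of_nonneg_left (real_inner_le_norm _ _) (hw0 i).le
    have h2 : (∑ i, w i * ‖d i‖) ^ 2 ≤ ∑ i, w i * ‖d i‖ ^ 2 := by
      have := Finset.sum_sq_le_sum_mul_sum_of_sq_eq_mul (Finset.univ : Finset (Fin m))
        (r := fun i => w i * ‖d i‖) (f := fun i => w i) (g := fun i => w i * ‖d i‖ ^ 2)
        (fun i _ => (hw0 i).le) (fun i _ => mul_nonneg (hw0 i).le (by positivity))
        (fun i _ => by ring)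
      rwa [hw1, one_mul] at this
    have hDn : 0 < ‖D‖ := norm_pos_iff.mpr hDne
    nlinarith [Finset.sum_nonneg (fun i (_ : i ∈ Finset.univ) =>
      mul_nonneg (hw0 i).le (norm_nonneg (d i)))]
  set l : ℝ := (∑ i, w i * ‖T i x - x‖ ^ 2) / ‖∑ i, w i • (T i x - x)‖ ^ 2 with hl
  have hlval : l = (∑ i, w i * ‖d i‖ ^ 2) / ‖D‖ ^ 2 := by rw [hl, hd, hD]
  have hl1 : 1 ≤ l := by
    rw [hlval, le_div_iff₀ hDpos, one_mul]; exact hconv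
  have hlD : l * ‖D‖ ^ 2 = ∑ i, w i * ‖d i‖ ^ 2 := by
    rw [hlval, div_mul_cancel₀]; exact ne_of_gt hDpos
  -- expansion lemma
  have expand : ∀ (c : ℝ) (u : X),
      ⟪x - (x + c • D), u - (x + c • D)⟫ = -(c * ⟪D, u - x⟫) + c ^ 2 * ‖D‖ ^ 2 := by
    intro c u
    have e1 : x - (x + c • D) = -(c • D) := by abel
    have e2 : u - (x + c • D) = (u - x) - c • D := by abel
    rw [e1, e2, inner_neg_left, inner_sub_right, real_inner_smul_left,
      real_inner_smul_right, real_inner_smul_left, real_inner_self_eq_norm_sq]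
    ring
  constructor
  · intro q hq
    simp only [Set.mem_setOf_eq] at hq ⊢
    rw [hDeq, expand]
    have h1 := hsum_le q hq
    nlinarith [hl1, hlD, h1, hDpos]
  · intro u hu
    simp only [Set.mem_setOf_eq] at hu ⊢
    rw [hDeq, expand] at hu
    have hgoal : ⟪x - ∑ i, w i • T i x, u - ∑ i, w i • T i x⟫ =
        -(1 * ⟪D, u - x⟫) + 1 ^ 2 * ‖D‖ ^ 2 := by
      have := expand 1 u
      rw [one_smul] at this
      rw [← this]
      congr 1 <;> rw [← hDeq] <;> abel_nf
    rw [hgoal]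
    have hl0 : 0 < l := lt_of_lt_of_le one_pos hl1
    nlinarith [hl1, hDpos, hu]
end

section
/- Let T₁,…,T_m be cutters on a real Hilbert space X, let τ₁, τ₂ ∈ (0,1], x ∈ X, w a weight function, and L(x,w) := (Σᵢ w(i)‖Tᵢ(x) − x‖²)/‖T_w(x) − x‖² if T_w(x) ≠ x and 1 otherwise. If λ ∈ [τ₁, (2 − τ₂)L(x,w)] and q ∈ ∩ᵢ Fix(Tᵢ), then ‖T_{w,λ}(x) − q‖² ≤ ‖x − q‖² − τ₁τ₂ Σᵢ w(i)‖Tᵢ(x) − x‖². -/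
open scoped RealInnerProductSpace Classical

theorem stmt_9 {X : Type*} [NormedAddCommGroup X] [InnerProductSpace ℝ X]
    (m : ℕ) (T : Fin m → X → X)
    (hcut : ∀ i, ∀ q, T i q = q → ∀ x, ⟪x - T i x, q - T i x⟫ ≤ 0)
    (w : Fin m → ℝ) (hw0 : ∀ i, 0 ≤ w i) (hw1' : ∀ i, w i ≤ 1) (hw1 : ∑ i, w i = 1)
    (τ₁ τ₂ : ℝ) (hτ₁ : τ₁ ∈ Set.Ioc (0 : ℝ) 1) (hτ₂ : τ₂ ∈ Set.Ioc (0 : ℝ) 1)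
    (x : X) (lam : ℝ)
    (hlam : τ₁ ≤ lam ∧ lam ≤ (2 - τ₂) *
      (if (∑ i, w i • T i x) ≠ x
        then (∑ i, w i * ‖T i x - x‖ ^ 2) / ‖(∑ i, w i • T i x) - x‖ ^ 2
        else 1))
    (q : X) (hq : ∀ i, T i q = q) :
    ‖(x + lam • ((∑ i, w i • T i x) - x)) - q‖ ^ 2 ≤
      ‖x - q‖ ^ 2 - τ₁ * τ₂ * ∑ i, w i * ‖T i x - x‖ ^ 2 := by
  set u : X := (∑ i, w i • T i x) - x with hu
  set S : ℝ := ∑ i, w i * ‖T i x - x‖ ^ 2 with hS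
  have hSnn : 0 ≤ S :=
    Finset.sum_nonneg fun i _ => mul_nonneg (hw0 i) (by positivity)
  have hu' : u = ∑ i, w i • (T i x - x) := by
    simp only [hu, smul_sub, Finset.sum_sub_distrib, ← Finset.sum_smul, hw1, one_smul]
  -- each term bound
  have hterm : ∀ i, ‖T i x - x‖ ^ 2 ≤ ⟪T i x - x, q - x⟫ := by
    intro i
    have h := hcut i q (hq i) x
    have hqx : q - T i x = (q - x) + (x - T i x) := by abel
    rw [hqx, inner_add_right] at h
    have hsq : ⟪x - T i x, x - T i x⟫ = ‖x - T i x‖ ^ 2 := real_inner_self_eq_norm_sq _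
    have hnorm : ‖x - T i x‖ = ‖T i x - x‖ := norm_sub_rev _ _
    have hflip : ⟪x - T i x, q - x⟫ = -⟪T i x - x, q - x⟫ := by
      rw [show x - T i x = -(T i x - x) by abel, inner_neg_left]
    have hnorm2 : ‖x - T i x‖ ^ 2 = ‖T i x - x‖ ^ 2 := by rw [hnorm]
    linarith [h, hsq.le, hsq.ge, hnorm2.le, hnorm2.ge, hflip.le, hflip.ge]
  have hkey : S ≤ ⟪u, q - x⟫ := by
    rw [hu', sum_inner]
    refine Finset.sum_le_sum fun i _ => ?_
    rw [real_inner_smul_left]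
    exact mul_le_mul_of_nonneg_left (hterm i) (hw0 i)
  have hexp : ‖(x + lam • u) - q‖ ^ 2
      = ‖x - q‖ ^ 2 + 2 * (lam * ⟪u, q - x⟫) * (-1) + lam ^ 2 * ‖u‖ ^ 2 := by
    have : (x + lam • u) - q = (x - q) + lam • u := by abel
    rw [this, norm_add_sq_real, real_inner_smul_right, norm_smul]
    have : ⟪x - q, u⟫ = -⟪u, q - x⟫ := by
      rw [← inner_neg_right, show -(q - x) = x - q by abel, real_inner_comm]
    rw [this]
    simp only [mul_pow, Real.norm_eq_abs, sq_abs]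
    ring
  have hlam0 : 0 < lam := lt_of_lt_of_le hτ₁.1 hlam.1
  rw [hexp]
  by_cases hne : (∑ i, w i • T i x) ≠ x
  · have hune : u ≠ 0 := sub_ne_zero.mpr hne
    have hun : 0 < ‖u‖ := norm_pos_iff.mpr hune
    have hupos : 0 < ‖u‖ ^ 2 := by positivity
    have hlam2 : lam ≤ (2 - τ₂) * (S / ‖u‖ ^ 2) := by
      have := hlam.2; rw [if_pos hne] at this; exact this
    have hlam3 : lam * ‖u‖ ^ 2 ≤ (2 - τ₂) * S := by
      have h2 := mul_le_mul_of_nonneg_right hlam2 hupos.le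
      rwa [mul_assoc, div_mul_cancel₀ _ (ne_of_gt hupos)] at h2
    nlinarith [mul_le_mul_of_nonneg_left hlam3 hlam0.le,
      mul_le_mul_of_nonneg_left hkey hlam0.le,
      mul_nonneg (sub_nonneg.mpr hlam.1) (mul_nonneg hτ₂.1.le hSnn)]
  · push_neg at hne
    have hu0 : u = 0 := sub_eq_zero.mpr hne
    have hS0 : S = 0 := le_antisymm (by simpa [hu0] using hkey) hSnn
    simp [hu0, hS0]
end

section
/- Let T₁,…,T_m be cutters on a real Hilbert space X with ∩ᵢ Fix(Tᵢ) ≠ ∅, τ₁, τ₂ ∈ (0,1], x ∈ X, w a weight function, and λ ∈ [τ₁, (2 − τ₂)L(x,w)]. If T_{w,λ}(x) = x, then Tᵢ(x) = x for every i with w(i) > 0. -/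
open scoped RealInnerProductSpace Classical

theorem stmt_10 {X : Type*} [NormedAddCommGroup X] [InnerProductSpace ℝ X]
    (m : ℕ) (T : Fin m → X → X)
    (hcut : ∀ i, ∀ q, T i q = q → ∀ x, ⟪x - T i x, q - T i x⟫ ≤ 0)
    (hF : ∃ q, ∀ i, T i q = q)
    (w : Fin m → ℝ) (hw0 : ∀ i, 0 ≤ w i) (hw1' : ∀ i, w i ≤ 1) (hw1 : ∑ i, w i = 1)
    (τ₁ τ₂ : ℝ) (hτ₁ : τ₁ ∈ Set.Ioc (0 : ℝ) 1) (hτ₂ : τ₂ ∈ Set.Ioc (0 : ℝ) 1)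
    (x : X) (lam : ℝ)
    (hlam : τ₁ ≤ lam ∧ lam ≤ (2 - τ₂) *
      (if (∑ i, w i • T i x) ≠ x
        then (∑ i, w i * ‖T i x - x‖ ^ 2) / ‖(∑ i, w i • T i x) - x‖ ^ 2
        else 1))
    (hfix : x + lam • ((∑ i, w i • T i x) - x) = x) :
    ∀ i, 0 < w i → T i x = x := by
  obtain ⟨q, hq⟩ := hF
  have hlam0 : lam ≠ 0 := ne_of_gt (lt_of_lt_of_le hτ₁.1 hlam.1)
  have hTw : (∑ i, w i • T i x) = x := by
    have h0 : lam • ((∑ i, w i • T i x) - x) = 0 := by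
      have := hfix
      rwa [add_eq_left] at this
    have := (smul_eq_zero.mp h0).resolve_left hlam0
    exact sub_eq_zero.mp this
  -- key per-index inequality
  have hi : ∀ i, ‖T i x - x‖ ^ 2 ≤ ⟪T i x - x, q - x⟫ := by
    intro i
    have h := hcut i q (hq i) x
    have hexp : ⟪x - T i x, q - T i x⟫ = ‖T i x - x‖ ^ 2 - ⟪T i x - x, q - x⟫ := by
      have : q - T i x = (q - x) + (x - T i x) := by abel
      rw [this, inner_add_right]
      have e1 : x - T i x = -(T i x - x) := by abel
      rw [e1, inner_neg_left, inner_neg_left, inner_neg_right, neg_neg,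
        real_inner_self_eq_norm_sq]
      ring
    linarith [hexp ▸ h]
  -- sum of the inner products is zero
  have hsum0 : ∑ i, w i * ⟪T i x - x, q - x⟫ = 0 := by
    have : ∑ i, w i * ⟪T i x - x, q - x⟫ = ⟪∑ i, w i • (T i x - x), q - x⟫ := by
      rw [sum_inner]
      exact Finset.sum_congr rfl fun i _ => (real_inner_smul_left _ _ _).symm
    rw [this]
    have hz : ∑ i, w i • (T i x - x) = 0 := by
      simp only [smul_sub, Finset.sum_sub_distrib, hTw, ← Finset.sum_smul, hw1, one_smul,
        sub_self]
    rw [hz, inner_zero_left]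
  have hsumle : ∑ i, w i * ‖T i x - x‖ ^ 2 ≤ 0 := by
    calc ∑ i, w i * ‖T i x - x‖ ^ 2 ≤ ∑ i, w i * ⟪T i x - x, q - x⟫ :=
          Finset.sum_le_sum fun i _ => mul_le_mul_of_nonneg_left (hi i) (hw0 i)
      _ = 0 := hsum0
  have hsumeq : ∑ i, w i * ‖T i x - x‖ ^ 2 = 0 :=
    le_antisymm hsumle (Finset.sum_nonneg fun i _ =>
      mul_nonneg (hw0 i) (by positivity))
  intro i hwi
  have := (Finset.sum_eq_zero_iff_of_nonneg (fun i _ =>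
    mul_nonneg (hw0 i) (by positivity))).mp hsumeq i (Finset.mem_univ i)
  have hnorm : ‖T i x - x‖ ^ 2 = 0 := by
    rcases mul_eq_zero.mp this with h | h
    · exact absurd h (ne_of_gt hwi)
    · exact h
  have : T i x - x = 0 := by
    have := pow_eq_zero_iff (n := 2) (by norm_num) |>.mp hnorm
    exact norm_eq_zero.mp this
  exact sub_eq_zero.mp this
end

section
/- Let T₁,…,T_m be cutters on a real Hilbert space X with F := ∩ᵢ Fix(Tᵢ) ≠ ∅, let w: {1,…,m} → [0,1] be a weight function with positive-support restriction ŵ, fix x ∈ X, and let λ̂ := (Σ_{i: w(i)>0} ŵ(i)‖Tᵢ(x) − x‖²)/‖Σ_{i: w(i)>0} ŵ(i)(Tᵢ(x) − x)‖² (when defined). Then for every λ ∈ [0, λ̂], F ⊆ H(x, T_{w,λ}(x)). -/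
open scoped RealInnerProductSpace

theorem stmt_12 {X : Type*} [NormedAddCommGroup X] [InnerProductSpace ℝ X]
    (m : ℕ) (T : Fin m → X → X)
    (hcut : ∀ i, ∀ q, T i q = q → ∀ x, ⟪x - T i x, q - T i x⟫ ≤ 0)
    (hF : ∃ q, ∀ i, T i q = q)
    (w : Fin m → ℝ) (hw0 : ∀ i, 0 ≤ w i) (hw1' : ∀ i, w i ≤ 1) (hw1 : ∑ i, w i = 1)
    (x : X) (lam : ℝ)
    (hlam : 0 ≤ lam ∧ lam ≤
      (∑ i ∈ Finset.univ.filter fun i => 0 < w i, w i * ‖T i x - x‖ ^ 2) /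
        ‖∑ i ∈ Finset.univ.filter fun i => 0 < w i, w i • (T i x - x)‖ ^ 2) :
    {q | ∀ i, T i q = q} ⊆
      {u | ⟪x - (x + lam • ((∑ i, w i • T i x) - x)),
            u - (x + lam • ((∑ i, w i • T i x) - x))⟫ ≤ 0} := by
  obtain ⟨hlam0, hlamle⟩ := hlam
  intro q hq
  simp only [Set.mem_setOf_eq] at hq ⊢
  set v : X := (∑ i, w i • T i x) - x with hvdef
  have hv : v = ∑ i, w i • (T i x - x) := by
    simp [hvdef, smul_sub, Finset.sum_sub_distrib, ← Finset.sum_smul, hw1]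
  have hfv : (∑ i ∈ Finset.univ.filter fun i => 0 < w i, w i • (T i x - x)) = v := by
    rw [hv]
    refine Finset.sum_subset (Finset.filter_subset _ _) ?_
    intro i _ hi
    simp only [Finset.mem_filter, Finset.mem_univ, true_and] at hi
    have : w i = 0 := le_antisymm (not_lt.mp hi) (hw0 i)
    simp [this]
  have hfS : (∑ i ∈ Finset.univ.filter fun i => 0 < w i, w i * ‖T i x - x‖ ^ 2)
      = ∑ i, w i * ‖T i x - x‖ ^ 2 := by
    refine Finset.sum_subset (Finset.filter_subset _ _) ?_
    intro i _ hi
    simp only [Finset.mem_filter, Finset.mem_univ, true_and] at hi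
    have : w i = 0 := le_antisymm (not_lt.mp hi) (hw0 i)
    simp [this]
  set S : ℝ := ∑ i, w i * ‖T i x - x‖ ^ 2 with hSdef
  have hS0 : 0 ≤ S := Finset.sum_nonneg fun i _ =>
    mul_nonneg (hw0 i) (by positivity)
  have hSle : S ≤ ⟪v, q - x⟫ := by
    rw [hv, sum_inner]
    apply Finset.sum_le_sum
    intro i _
    rw [real_inner_smul_left]
    refine mul_le_mul_of_nonneg_left ?_ (hw0 i)
    have hcuti := hcut i q (hq i) x
    have hexp : ⟪x - T i x, q - T i x⟫ = ⟪x - T i x, q - x⟫ + ‖x - T i x‖ ^ 2 := by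
      have h : q - T i x = (q - x) + (x - T i x) := by abel
      rw [h, inner_add_right, real_inner_self_eq_norm_sq]
    have h2 : ⟪T i x - x, q - x⟫ = -⟪x - T i x, q - x⟫ := by
      rw [← inner_neg_left]
      congr 1
      abel
    have h3 : ‖x - T i x‖ = ‖T i x - x‖ := norm_sub_rev _ _
    rw [hexp, h3] at hcuti
    rw [h2]
    linarith
  have hlamle' : lam ≤ S / ‖v‖ ^ 2 := by rwa [hfv, hfS] at hlamle
  have hgoal : ⟪x - (x + lam • v), q - (x + lam • v)⟫
      = -(lam * ⟪v, q - x⟫) + lam ^ 2 * ‖v‖ ^ 2 := by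
    have h1 : x - (x + lam • v) = -(lam • v) := by abel
    have h2 : q - (x + lam • v) = (q - x) - lam • v := by abel
    rw [h1, h2, inner_neg_left, inner_sub_right, real_inner_smul_left,
      real_inner_smul_right, real_inner_smul_left, real_inner_self_eq_norm_sq]
    ring
  rw [hgoal]
  rcases eq_or_ne v 0 with hv0 | hv0
  · simp [hv0, inner_zero_left]
  · have hnv : 0 < ‖v‖ ^ 2 := by
      have := norm_pos_iff.mpr hv0
      positivity
    have hA : lam * ‖v‖ ^ 2 ≤ S := by
      rwa [← le_div_iff₀ hnv]
    nlinarith [mul_le_mul_of_nonneg_left hA hlam0, mul_le_mul_of_nonneg_left hSle hlam0]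
end

section
/- Any sequence {x^k} generated by the extrapolated block-iterative algorithm x^{k+1} := x^k + λ_k(Σᵢ w_k(i)Tᵢ(x^k) − x^k), where each Tᵢ is a cutter, each w_k is a weight function, and λ_k ∈ [τ₁, (2 − τ₂)L(x^k, w_k)] with τ₁, τ₂ ∈ (0,1], is Fejér-monotone with respect to F := ∩ᵢ Fix(Tᵢ), i.e., ‖x^{k+1} − q‖ ≤ ‖x^k − q‖ for all k and all q ∈ F. -/
open scoped RealInnerProductSpace Classical

theorem stmt_14 {X : Type*} [NormedAddCommGroup X] [InnerProductSpace ℝ X]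
    (m : ℕ) (T : Fin m → X → X)
    (hcut : ∀ i, ∀ q, T i q = q → ∀ x, ⟪x - T i x, q - T i x⟫ ≤ 0)
    (hF : ∃ q, ∀ i, T i q = q)
    (w : ℕ → Fin m → ℝ) (hw0 : ∀ k i, 0 ≤ w k i) (hw1' : ∀ k i, w k i ≤ 1)
    (hw1 : ∀ k, ∑ i, w k i = 1)
    (τ₁ τ₂ : ℝ) (hτ₁ : τ₁ ∈ Set.Ioc (0 : ℝ) 1) (hτ₂ : τ₂ ∈ Set.Ioc (0 : ℝ) 1)
    (lam : ℕ → ℝ)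
    (x : ℕ → X)
    (hlam : ∀ k, τ₁ ≤ lam k ∧ lam k ≤ (2 - τ₂) *
      (if (∑ i, w k i • T i (x k)) ≠ x k
        then (∑ i, w k i * ‖T i (x k) - x k‖ ^ 2) / ‖(∑ i, w k i • T i (x k)) - x k‖ ^ 2
        else 1))
    (hx : ∀ k, x (k + 1) = x k + lam k • ((∑ i, w k i • T i (x k)) - x k)) :
    ∀ k, ∀ q, (∀ i, T i q = q) → ‖x (k + 1) - q‖ ≤ ‖x k - q‖ := by
  intro k q hq
  set u : X := (∑ i, w k i • T i (x k)) - x k with hu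
  set S : ℝ := ∑ i, w k i * ‖T i (x k) - x k‖ ^ 2 with hS
  have hlpos : 0 < lam k := lt_of_lt_of_le hτ₁.1 (hlam k).1
  by_cases hz : (∑ i, w k i • T i (x k)) = x k
  · rw [hx k, hz, sub_self, smul_zero, add_zero]
  · -- cutter inequality for each i
    have hkey : ∀ i, ‖T i (x k) - x k‖ ^ 2 ≤ ⟪T i (x k) - x k, q - x k⟫ := by
      intro i
      have h := hcut i q (hq i) (x k)
      have e1 : x k - T i (x k) = -(T i (x k) - x k) := by abel
      have e2 : q - T i (x k) = (q - x k) - (T i (x k) - x k) := by abel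
      rw [e1, e2, inner_neg_left, inner_sub_right, real_inner_self_eq_norm_sq] at h
      linarith
    have hS0 : 0 ≤ S := Finset.sum_nonneg fun i _ =>
      mul_nonneg (hw0 k i) (by positivity)
    -- u as a weighted sum of differences
    have hu2 : u = ∑ i, w k i • (T i (x k) - x k) := by
      rw [hu]
      rw [Finset.sum_congr rfl (fun i _ => smul_sub (w k i) (T i (x k)) (x k)),
        Finset.sum_sub_distrib, ← Finset.sum_smul, hw1 k, one_smul]
    have hinn : S ≤ ⟪u, q - x k⟫ := by
      rw [hu2, sum_inner, hS]
      apply Finset.sum_le_sum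
      intro i _
      rw [real_inner_smul_left]
      exact mul_le_mul_of_nonneg_left (hkey i) (hw0 k i)
    have hune : u ≠ 0 := sub_ne_zero.mpr hz
    have hun : (0:ℝ) < ‖u‖ ^ 2 := pow_pos (norm_pos_iff.mpr hune) 2
    have hlam2 : lam k ≤ (2 - τ₂) * (S / ‖u‖ ^ 2) := by
      have := (hlam k).2
      rwa [if_pos hz] at this
    have hstep : lam k * ‖u‖ ^ 2 ≤ (2 - τ₂) * S := by
      rw [mul_div_assoc'] at hlam2
      calc lam k * ‖u‖ ^ 2 ≤ ((2 - τ₂) * S / ‖u‖ ^ 2) * ‖u‖ ^ 2 :=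
            mul_le_mul_of_nonneg_right hlam2 (le_of_lt hun)
        _ = (2 - τ₂) * S := div_mul_cancel₀ _ (ne_of_gt hun)
    have hτ₂0 : 0 < τ₂ := hτ₂.1
    have hstep2 : lam k ^ 2 * ‖u‖ ^ 2 ≤ 2 * lam k * S := by
      have h1 : lam k * (lam k * ‖u‖ ^ 2) ≤ lam k * ((2 - τ₂) * S) :=
        mul_le_mul_of_nonneg_left hstep (le_of_lt hlpos)
      nlinarith [mul_nonneg (le_of_lt hlpos) hS0]
    have hexp : ‖x (k+1) - q‖ ^ 2 =
        ‖x k - q‖ ^ 2 - 2 * lam k * ⟪u, q - x k⟫ + lam k ^ 2 * ‖u‖ ^ 2 := by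
      have e : x (k+1) - q = (x k - q) + lam k • u := by rw [hx k]; abel
      rw [e, @norm_add_sq_real, real_inner_smul_right, norm_smul, mul_pow]
      have : ⟪x k - q, u⟫ = - ⟪u, q - x k⟫ := by
        rw [real_inner_comm, ← inner_neg_right]
        congr 1; abel
      rw [this]
      simp [sq_abs]
      ring
    have hfin : ‖x (k+1) - q‖ ^ 2 ≤ ‖x k - q‖ ^ 2 := by
      have h2 : 2 * lam k * S ≤ 2 * lam k * ⟪u, q - x k⟫ :=
        mul_le_mul_of_nonneg_left hinn (by linarith)
      linarith [hexp, hstep2]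
    nlinarith [norm_nonneg (x (k+1) - q), norm_nonneg (x k - q)]
end

section
/- For any sequence {x^k} generated by the extrapolated block-iterative algorithm (x^{k+1} = T_{w_k,λ_k}(x^k) with λ_k ∈ [τ₁, (2−τ₂)L(x^k,w_k)], τ₁, τ₂ ∈ (0,1], cutters Tᵢ with nonempty common fixed point set), the series Σ_{k=0}^∞ ‖x^{k+1} − x^k‖² converges; in particular ‖x^{k+1} − x^k‖ → 0. -/
open scoped RealInnerProductSpace Classical

theorem stmt_15 {X : Type*} [NormedAddCommGroup X] [InnerProductSpace ℝ X]
    (m : ℕ) (T : Fin m → X → X)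
    (hcut : ∀ i, ∀ q, T i q = q → ∀ x, ⟪x - T i x, q - T i x⟫ ≤ 0)
    (hF : ∃ q, ∀ i, T i q = q)
    (w : ℕ → Fin m → ℝ) (hw0 : ∀ k i, 0 ≤ w k i) (hw1' : ∀ k i, w k i ≤ 1)
    (hw1 : ∀ k, ∑ i, w k i = 1)
    (τ₁ τ₂ : ℝ) (hτ₁ : τ₁ ∈ Set.Ioc (0 : ℝ) 1) (hτ₂ : τ₂ ∈ Set.Ioc (0 : ℝ) 1)
    (lam : ℕ → ℝ)
    (x : ℕ → X)
    (hlam : ∀ k, τ₁ ≤ lam k ∧ lam k ≤ (2 - τ₂) *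
      (if (∑ i, w k i • T i (x k)) ≠ x k
        then (∑ i, w k i * ‖T i (x k) - x k‖ ^ 2) / ‖(∑ i, w k i • T i (x k)) - x k‖ ^ 2
        else 1))
    (hx : ∀ k, x (k + 1) = x k + lam k • ((∑ i, w k i • T i (x k)) - x k)) :
    Summable (fun k => ‖x (k + 1) - x k‖ ^ 2) ∧
    Filter.Tendsto (fun k => ‖x (k + 1) - x k‖) Filter.atTop (nhds 0) := by
  obtain ⟨q, hq⟩ := hF
  have hτ₂0 : 0 < τ₂ := hτ₂.1
  have h2τ : 0 < 2 - τ₂ := by linarith [hτ₂.2]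
  set c : ℝ := τ₂ / (2 - τ₂) with hc
  have hc0 : 0 < c := div_pos hτ₂0 h2τ
  have hcmul : c * (2 - τ₂) = τ₂ := div_mul_cancel₀ _ (ne_of_gt h2τ)
  -- Fejér monotonicity
  have key : ∀ k, ‖x (k+1) - q‖^2 + c * ‖x (k+1) - x k‖^2 ≤ ‖x k - q‖^2 := by
    intro k
    set u : X := (∑ i, w k i • T i (x k)) - x k with hu
    set S : ℝ := ∑ i, w k i * ‖T i (x k) - x k‖^2 with hS
    have hS0 : 0 ≤ S :=
      Finset.sum_nonneg fun i _ => mul_nonneg (hw0 k i) (sq_nonneg _)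
    have hl0 : 0 < lam k := lt_of_lt_of_le hτ₁.1 (hlam k).1
    have hinner : S ≤ ⟪u, q - x k⟫ := by
      have hu' : u = ∑ i, w k i • (T i (x k) - x k) := by
        simp only [smul_sub, Finset.sum_sub_distrib, ← Finset.sum_smul, hw1 k, one_smul, hu]
      rw [hu', sum_inner]
      apply Finset.sum_le_sum
      intro i _
      rw [real_inner_smul_left]
      refine mul_le_mul_of_nonneg_left ?_ (hw0 k i)
      have h := hcut i q (hq i) (x k)
      have hrw : x k - T i (x k) = -(T i (x k) - x k) := by abel
      have hrw2 : q - T i (x k) = (q - x k) - (T i (x k) - x k) := by abel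
      rw [hrw, hrw2, inner_neg_left, inner_sub_right, real_inner_self_eq_norm_sq] at h
      linarith [h]
    have hexp : x (k+1) - q = (x k - q) + lam k • u := by
      rw [hx k]; abel
    have hnorm : ‖x (k+1) - q‖^2
        = ‖x k - q‖^2 + 2 * (lam k * ⟪x k - q, u⟫) + lam k ^ 2 * ‖u‖^2 := by
      rw [hexp, @norm_add_sq_real, real_inner_smul_right, norm_smul]
      simp [mul_pow, Real.norm_eq_abs, sq_abs]
    have hΔ : x (k+1) - x k = lam k • u := by rw [hx k]; abel
    have hΔn : ‖x (k+1) - x k‖^2 = lam k ^ 2 * ‖u‖^2 := by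
      rw [hΔ, norm_smul]; simp [mul_pow, Real.norm_eq_abs, sq_abs]
    have hip : ⟪x k - q, u⟫ ≤ -S := by
      have : ⟪x k - q, u⟫ = - ⟪u, q - x k⟫ := by
        rw [real_inner_comm]
        have : x k - q = -(q - x k) := by abel
        rw [this, inner_neg_right]
      linarith [hinner, this.le, this.ge]
    rw [hnorm, hΔn]
    by_cases hu0 : (∑ i, w k i • T i (x k)) ≠ x k
    · have hun : u ≠ 0 := sub_ne_zero.mpr hu0
      have hun2 : (0:ℝ) < ‖u‖^2 := pow_pos (norm_pos_iff.mpr hun) 2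
      have hlam2 := (hlam k).2
      rw [if_pos hu0] at hlam2
      have hlu : lam k * ‖u‖^2 ≤ (2 - τ₂) * S := by
        have h' : lam k ≤ (2 - τ₂) * (S / ‖u‖^2) := hlam2
        have h2 := mul_le_mul_of_nonneg_right h' (le_of_lt hun2)
        rw [mul_assoc, div_mul_cancel₀ _ (ne_of_gt hun2)] at h2
        exact h2
      -- goal: ‖a‖² + 2 λ ⟪a,u⟫ + λ²‖u‖² + c λ²‖u‖² ≤ ‖a‖²
      nlinarith [mul_le_mul_of_nonneg_left hlu hl0.le,
        mul_le_mul_of_nonneg_left hip (mul_pos hl0 hl0).le,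
        mul_le_mul_of_nonneg_left hlu (mul_pos hc0 hl0).le,
        mul_nonneg hl0.le hS0]
    · have : u = 0 := by
        push_neg at hu0
        rw [hu, hu0, sub_self]
      simp [this]
  -- partial sums bounded
  have hsum : ∀ n, ∑ k ∈ Finset.range n, ‖x (k+1) - x k‖^2 ≤ ‖x 0 - q‖^2 / c := by
    intro n
    have htel : c * ∑ k ∈ Finset.range n, ‖x (k+1) - x k‖^2
        ≤ ‖x 0 - q‖^2 - ‖x n - q‖^2 := by
      induction n with
      | zero => simp
      | succ n ih =>
        rw [Finset.sum_range_succ, mul_add]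
        have := key n
        linarith
    rw [le_div_iff₀ hc0, mul_comm]
    have : (0:ℝ) ≤ ‖x n - q‖^2 := sq_nonneg _
    linarith
  have hsummable : Summable (fun k => ‖x (k + 1) - x k‖ ^ 2) :=
    summable_of_sum_range_le (fun k => sq_nonneg _) hsum
  refine ⟨hsummable, ?_⟩
  have h0 := hsummable.tendsto_atTop_zero
  have := h0.sqrt
  rw [Real.sqrt_zero] at this
  convert this using 2 with k
  rw [Real.sqrt_sq (norm_nonneg _)]
end

section
/- Suppose X is a finite-dimensional real Hilbert space, the cutters T₁,…,T_m are continuous with F := ∩ᵢ Fix(Tᵢ) ≠ ∅, the weights satisfy Σ_{k=0}^∞ w_k(i) = ∞ for every i, and {x^k} is generated by x^{k+1} = T_{w_k,λ_k}(x^k) with λ_k ∈ [τ₁, (2−τ₂)L(x^k,w_k)], τ₁, τ₂ ∈ (0,1]. If x^k converges to x*, then x* ∈ F. -/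
open scoped RealInnerProductSpace Classical

theorem stmt_18 {X : Type*} [NormedAddCommGroup X] [InnerProductSpace ℝ X]
    [FiniteDimensional ℝ X]
    (m : ℕ) (T : Fin m → X → X) (hTcont : ∀ i, Continuous (T i))
    (hcut : ∀ i, ∀ q, T i q = q → ∀ x, ⟪x - T i x, q - T i x⟫ ≤ 0)
    (hF : ∃ q, ∀ i, T i q = q)
    (w : ℕ → Fin m → ℝ) (hw0 : ∀ k i, 0 ≤ w k i) (hw1' : ∀ k i, w k i ≤ 1)
    (hw1 : ∀ k, ∑ i, w k i = 1)
    (hwdiv : ∀ i, Filter.Tendsto (fun n => ∑ k ∈ Finset.range n, w k i)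
      Filter.atTop Filter.atTop)
    (τ₁ τ₂ : ℝ) (hτ₁ : τ₁ ∈ Set.Ioc (0 : ℝ) 1) (hτ₂ : τ₂ ∈ Set.Ioc (0 : ℝ) 1)
    (lam : ℕ → ℝ)
    (x : ℕ → X)
    (hlam : ∀ k, τ₁ ≤ lam k ∧ lam k ≤ (2 - τ₂) *
      (if (∑ i, w k i • T i (x k)) ≠ x k
        then (∑ i, w k i * ‖T i (x k) - x k‖ ^ 2) / ‖(∑ i, w k i • T i (x k)) - x k‖ ^ 2
        else 1))
    (hx : ∀ k, x (k + 1) = x k + lam k • ((∑ i, w k i • T i (x k)) - x k))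
    (xstar : X) (hconv : Filter.Tendsto x Filter.atTop (nhds xstar)) :
    ∀ i, T i xstar = xstar := by
  obtain ⟨q, hq⟩ := hF
  have τ₁pos : (0:ℝ) < τ₁ := hτ₁.1
  have τ₂pos : (0:ℝ) < τ₂ := hτ₂.1
  set S : ℕ → ℝ := fun k => ∑ i, w k i * ‖T i (x k) - x k‖ ^ 2 with hSdef
  have hSnonneg : ∀ k, 0 ≤ S k := fun k =>
    Finset.sum_nonneg fun i _ => mul_nonneg (hw0 k i) (by positivity)
  -- key cutter inequality
  have key : ∀ (y : X) i, ‖T i y - y‖ ^ 2 ≤ ⟪T i y - y, q - y⟫ := by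
    intro y i
    have h := hcut i q (hq i) y
    have hrw : q - T i y = (q - y) + (y - T i y) := by abel
    rw [hrw, inner_add_right] at h
    have hn : ⟪y - T i y, y - T i y⟫ = ‖y - T i y‖ ^ 2 :=
      real_inner_self_eq_norm_sq _
    have h2 : ⟪T i y - y, q - y⟫ = -⟪y - T i y, q - y⟫ := by
      rw [show T i y - y = -(y - T i y) by abel, inner_neg_left]
    have h3 : ‖T i y - y‖ = ‖y - T i y‖ := norm_sub_rev _ _
    rw [h2, h3]
    linarith [h, hn.symm.le, hn.le]
  -- u k expression
  have hu : ∀ k, (∑ i, w k i • T i (x k)) - x k = ∑ i, w k i • (T i (x k) - x k) := by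
    intro k
    simp only [smul_sub]
    rw [Finset.sum_sub_distrib, ← Finset.sum_smul, hw1, one_smul]
  have hinner : ∀ k, S k ≤ ⟪(∑ i, w k i • T i (x k)) - x k, q - x k⟫ := by
    intro k
    rw [hu, sum_inner]
    refine Finset.sum_le_sum fun i _ => ?_
    rw [real_inner_smul_left]
    exact mul_le_mul_of_nonneg_left (key (x k) i) (hw0 k i)
  -- main Fejér inequality
  have main : ∀ k, ‖x (k + 1) - q‖ ^ 2 + τ₁ * τ₂ * S k ≤ ‖x k - q‖ ^ 2 := by
    intro k
    obtain ⟨hl1, hl2⟩ := hlam k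
    have hlampos : 0 < lam k := lt_of_lt_of_le τ₁pos hl1
    set u : X := (∑ i, w k i • T i (x k)) - x k with hudef
    have hexp : ‖x (k + 1) - q‖ ^ 2
        = ‖x k - q‖ ^ 2 + 2 * (lam k * ⟪x k - q, u⟫) + (lam k) ^ 2 * ‖u‖ ^ 2 := by
      have h1 : x (k + 1) - q = (x k - q) + lam k • u := by
        rw [hx k]; abel
      rw [h1, norm_add_sq_real, real_inner_smul_right, norm_smul, mul_pow, Real.norm_eq_abs, sq_abs]
    have hinner' : ⟪x k - q, u⟫ ≤ -S k := by
      have h := hinner k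
      have h2 : ⟪x k - q, u⟫ = -⟪u, q - x k⟫ := by
        rw [real_inner_comm, show x k - q = -(q - x k) by abel, inner_neg_right]
      linarith [h2.le, h2.ge, h]
    by_cases hz : u = 0
    · have hS0 : S k = 0 := by
        have h := hinner k
        rw [← hudef, hz] at h
        simp only [inner_zero_left] at h
        linarith [hSnonneg k]
      rw [hexp, hz, hS0]
      simp
    · have hcond : (∑ i, w k i • T i (x k)) ≠ x k := by
        intro hc
        apply hz
        rw [hudef, hc, sub_self]
      rw [if_pos hcond] at hl2
      have hupos : (0:ℝ) < ‖u‖ ^ 2 := pow_pos (norm_pos_iff.mpr hz) 2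
      have h1 : lam k * ‖u‖ ^ 2 ≤ (2 - τ₂) * S k := by
        have h' : lam k ≤ (2 - τ₂) * (S k / ‖u‖ ^ 2) := hl2
        calc lam k * ‖u‖ ^ 2 ≤ (2 - τ₂) * (S k / ‖u‖ ^ 2) * ‖u‖ ^ 2 :=
              mul_le_mul_of_nonneg_right h' hupos.le
          _ = (2 - τ₂) * S k := by field_simp
      have h2 : (lam k) ^ 2 * ‖u‖ ^ 2 ≤ lam k * ((2 - τ₂) * S k) := by
        have := mul_le_mul_of_nonneg_left h1 hlampos.le
        nlinarith [this]
      have h3 : 2 * (lam k * ⟪x k - q, u⟫) ≤ 2 * (lam k * (-S k)) := by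
        have := mul_le_mul_of_nonneg_left hinner' hlampos.le
        linarith
      have h4 : τ₁ * (τ₂ * S k) ≤ lam k * (τ₂ * S k) :=
        mul_le_mul_of_nonneg_right hl1 (mul_nonneg τ₂pos.le (hSnonneg k))
      rw [hexp]
      nlinarith [h2, h3, h4]
  -- telescoping bound
  have tele : ∀ n, ‖x n - q‖ ^ 2 + τ₁ * τ₂ * ∑ k ∈ Finset.range n, S k ≤ ‖x 0 - q‖ ^ 2 := by
    intro n
    induction n with
    | zero => simp
    | succ n ih =>
      rw [Finset.sum_range_succ, mul_add]
      have := main n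
      linarith
  have sumbound : ∀ n, ∑ k ∈ Finset.range n, S k ≤ ‖x 0 - q‖ ^ 2 / (τ₁ * τ₂) := by
    intro n
    rw [le_div_iff₀ (by positivity)]
    have h0 : (0:ℝ) ≤ ‖x n - q‖ ^ 2 := by positivity
    have := tele n
    linarith [this, h0]
  -- final argument
  intro i
  by_contra hne
  have hcont2 : Continuous fun y : X => ‖T i y - y‖ ^ 2 :=
    (((hTcont i).sub continuous_id).norm).pow 2
  have htend : Filter.Tendsto (fun k => ‖T i (x k) - x k‖ ^ 2) Filter.atTop
      (nhds (‖T i xstar - xstar‖ ^ 2)) := (hcont2.tendsto xstar).comp hconv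
  set ε : ℝ := ‖T i xstar - xstar‖ ^ 2 / 2 with hεdef
  have hεpos : 0 < ε := by
    have hne' : (0:ℝ) < ‖T i xstar - xstar‖ := norm_pos_iff.mpr (sub_ne_zero.mpr hne)
    rw [hεdef]
    positivity
  have hev : ∀ᶠ k in Filter.atTop, ε ≤ ‖T i (x k) - x k‖ ^ 2 :=
    htend.eventually (eventually_ge_nhds (by linarith : ε < ‖T i xstar - xstar‖ ^ 2))
  obtain ⟨N, hN⟩ := Filter.eventually_atTop.mp hev
  -- for k ≥ N, w k i * ε ≤ S k
  have hwS : ∀ k, N ≤ k → w k i * ε ≤ S k := by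
    intro k hk
    calc w k i * ε ≤ w k i * ‖T i (x k) - x k‖ ^ 2 :=
          mul_le_mul_of_nonneg_left (hN k hk) (hw0 k i)
      _ ≤ S k := Finset.single_le_sum
          (f := fun j => w k j * ‖T j (x k) - x k‖ ^ 2)
          (fun j _ => mul_nonneg (hw0 k j) (by positivity)) (Finset.mem_univ i)
  set C : ℝ := ‖x 0 - q‖ ^ 2 / (τ₁ * τ₂) with hCdef
  have hbound : ∀ n, N ≤ n → ∑ k ∈ Finset.range n, w k i
      ≤ (∑ k ∈ Finset.range N, w k i) + C / ε := by
    intro n hn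
    have hsplit : ∑ k ∈ Finset.range n, w k i
        = (∑ k ∈ Finset.range N, w k i) + ∑ k ∈ Finset.Ico N n, w k i := by
      rw [Finset.range_eq_Ico, Finset.range_eq_Ico]
      exact (Finset.sum_Ico_consecutive _ (Nat.zero_le N) hn).symm
    have h1 : (∑ k ∈ Finset.Ico N n, w k i) * ε ≤ ∑ k ∈ Finset.Ico N n, S k := by
      rw [Finset.sum_mul]
      exact Finset.sum_le_sum fun k hk => hwS k (Finset.mem_Ico.mp hk).1
    have h2 : ∑ k ∈ Finset.Ico N n, S k ≤ ∑ k ∈ Finset.range n, S k := by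
      rw [Finset.range_eq_Ico]
      exact Finset.sum_le_sum_of_subset_of_nonneg
        (Finset.Ico_subset_Ico (Nat.zero_le N) le_rfl)
        (fun k _ _ => hSnonneg k)
    have h3 : (∑ k ∈ Finset.Ico N n, w k i) * ε ≤ C := le_trans h1 (le_trans h2 (sumbound n))
    have h4 : ∑ k ∈ Finset.Ico N n, w k i ≤ C / ε := (le_div_iff₀ hεpos).mpr h3
    linarith [hsplit.le, hsplit.ge]
  set B : ℝ := (∑ k ∈ Finset.range N, w k i) + C / ε with hBdef
  have hev2 : ∀ᶠ n in Filter.atTop, B + 1 ≤ ∑ k ∈ Finset.range n, w k i :=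
    (hwdiv i).eventually_ge_atTop (B + 1)
  obtain ⟨n, hn1, hn2⟩ := (hev2.and (Filter.eventually_ge_atTop N)).exists
  have := hbound n hn2
  linarith
end

section
/- Suppose X is a finite-dimensional real Hilbert space, T₁,…,T_m are continuous cutters with F := ∩ᵢ Fix(Tᵢ) ≠ ∅, {w_k} are weight functions satisfying the intermittent condition: there exist s ∈ ℕ and α > 0 such that for every i ∈ {1,…,m} and every ℓ ∈ ℕ there is k ∈ {ℓ,…,ℓ+s−1} with w_k(i) ≥ α. Let {x^k} be generated by x^{k+1} = T_{w_k,λ_k}(x^k) with λ_k ∈ [τ₁, (2−τ₂)L(x^k,w_k)], τ₁, τ₂ ∈ (0,1]. Then {x^k} converges to a point of F. -/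
open scoped RealInnerProductSpace Classical
open Filter Topology

theorem stmt_19 {X : Type*} [NormedAddCommGroup X] [InnerProductSpace ℝ X]
    [FiniteDimensional ℝ X]
    (m : ℕ) (T : Fin m → X → X) (hTcont : ∀ i, Continuous (T i))
    (hcut : ∀ i, ∀ q, T i q = q → ∀ x, ⟪x - T i x, q - T i x⟫ ≤ 0)
    (hF : ∃ q, ∀ i, T i q = q)
    (w : ℕ → Fin m → ℝ) (hw0 : ∀ k i, 0 ≤ w k i) (hw1' : ∀ k i, w k i ≤ 1)
    (hw1 : ∀ k, ∑ i, w k i = 1)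
    (hinterm : ∃ (s : ℕ) (α : ℝ), 0 < s ∧ 0 < α ∧
      ∀ (i : Fin m) (ℓ : ℕ), ∃ k, ℓ ≤ k ∧ k < ℓ + s ∧ α ≤ w k i)
    (τ₁ τ₂ : ℝ) (hτ₁ : τ₁ ∈ Set.Ioc (0 : ℝ) 1) (hτ₂ : τ₂ ∈ Set.Ioc (0 : ℝ) 1)
    (lam : ℕ → ℝ)
    (x : ℕ → X)
    (hlam : ∀ k, τ₁ ≤ lam k ∧ lam k ≤ (2 - τ₂) *
      (if (∑ i, w k i • T i (x k)) ≠ x k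
        then (∑ i, w k i * ‖T i (x k) - x k‖ ^ 2) / ‖(∑ i, w k i • T i (x k)) - x k‖ ^ 2
        else 1))
    (hx : ∀ k, x (k + 1) = x k + lam k • ((∑ i, w k i • T i (x k)) - x k)) :
    ∃ xstar : X, (∀ i, T i xstar = xstar) ∧
      Filter.Tendsto x Filter.atTop (nhds xstar) := by
  obtain ⟨q0, hq0⟩ := hF
  obtain ⟨s, α, hs, hα, hint⟩ := hinterm
  obtain ⟨hτ₁0, hτ₁1⟩ := hτ₁
  obtain ⟨hτ₂0, hτ₂1⟩ := hτ₂
  set S : ℕ → ℝ := fun k => ∑ i, w k i * ‖T i (x k) - x k‖ ^ 2 with hSdef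
  set u : ℕ → X := fun k => (∑ i, w k i • T i (x k)) - x k with hudef
  have hu' : ∀ k, u k = ∑ i, w k i • (T i (x k) - x k) := by
    intro k
    simp only [hudef, smul_sub, Finset.sum_sub_distrib, ← Finset.sum_smul, hw1 k, one_smul]
  have hS0 : ∀ k, 0 ≤ S k := fun k => Finset.sum_nonneg fun i _ =>
    mul_nonneg (hw0 k i) (by positivity)
  -- (a) S k ≤ ⟪u k, p - x k⟫ for fixed points p
  have hA : ∀ (p : X), (∀ i, T i p = p) → ∀ k, S k ≤ ⟪u k, p - x k⟫ := by
    intro p hp k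
    rw [hu' k, sum_inner]
    apply Finset.sum_le_sum
    intro i _
    rw [real_inner_smul_left]
    have h1 : ⟪x k - T i (x k), p - T i (x k)⟫ ≤ 0 := hcut i p (hp i) (x k)
    have h3 : 0 ≤ ⟪T i (x k) - x k, p - T i (x k)⟫ := by
      rw [show T i (x k) - x k = -(x k - T i (x k)) by abel, inner_neg_left]
      linarith
    have h2 : ⟪T i (x k) - x k, p - x k⟫ =
        ⟪T i (x k) - x k, p - T i (x k)⟫ + ‖T i (x k) - x k‖ ^ 2 := by
      rw [← real_inner_self_eq_norm_sq, ← inner_add_right]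
      congr 1
      abel
    have h4 : ‖T i (x k) - x k‖ ^ 2 ≤ ⟪T i (x k) - x k, p - x k⟫ := by
      rw [h2]; linarith
    exact mul_le_mul_of_nonneg_left h4 (hw0 k i)
  -- (b) ‖u k‖^2 ≤ S k
  have hB : ∀ k, ‖u k‖ ^ 2 ≤ S k := by
    intro k
    have h : (⟪u k, u k⟫ : ℝ) = ∑ i, w k i * ⟪T i (x k) - x k, u k⟫ := by
      nth_rewrite 1 [hu' k]
      rw [sum_inner]
      simp only [real_inner_smul_left]
    have h2 : ∀ i : Fin m, w k i * ⟪T i (x k) - x k, u k⟫ ≤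
        w k i * ((‖T i (x k) - x k‖ ^ 2 + ‖u k‖ ^ 2) / 2) := by
      intro i
      apply mul_le_mul_of_nonneg_left _ (hw0 k i)
      have := real_inner_le_norm (T i (x k) - x k) (u k)
      nlinarith [sq_nonneg (‖T i (x k) - x k‖ - ‖u k‖)]
    have h3 : ‖u k‖ ^ 2 ≤ ∑ i, w k i * ((‖T i (x k) - x k‖ ^ 2 + ‖u k‖ ^ 2) / 2) := by
      have e0 : ‖u k‖ ^ 2 = ∑ i, w k i * ⟪T i (x k) - x k, u k⟫ := by
        rw [← h, real_inner_self_eq_norm_sq]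
      exact le_trans (le_of_eq e0) (Finset.sum_le_sum fun i _ => h2 i)
    have h4 : ∑ i, w k i * ((‖T i (x k) - x k‖ ^ 2 + ‖u k‖ ^ 2) / 2)
        = (S k + ‖u k‖ ^ 2) / 2 := by
      have e1 : ∀ i ∈ Finset.univ, w k i * ((‖T i (x k) - x k‖ ^ 2 + ‖u k‖ ^ 2) / 2)
          = w k i * ‖T i (x k) - x k‖ ^ 2 / 2 + w k i * (‖u k‖ ^ 2 / 2) :=
        fun i _ => by ring
      rw [Finset.sum_congr rfl e1, Finset.sum_add_distrib, ← Finset.sum_div,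
        ← Finset.sum_mul, hw1 k]
      simp only [hSdef]
      ring
    linarith
  have hSz : ∀ k, u k = 0 → S k = 0 := by
    intro k hk
    have h := hA q0 hq0 k
    rw [hk, inner_zero_left] at h
    linarith [hS0 k]
  have hlam0 : ∀ k, 0 < lam k := fun k => lt_of_lt_of_le hτ₁0 (hlam k).1
  have hkey : ∀ k, lam k ^ 2 * ‖u k‖ ^ 2 ≤ lam k * ((2 - τ₂) * S k) := by
    intro k
    by_cases hz : u k = 0
    · rw [hz, hSz k hz]
      simp
    · have hun : (0:ℝ) < ‖u k‖ ^ 2 := by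
        have := norm_pos_iff.mpr hz
        positivity
      have h2 := (hlam k).2
      rw [if_pos (sub_ne_zero.mp hz)] at h2
      have h3 : lam k * ‖u k‖ ^ 2 ≤ (2 - τ₂) * S k := by
        rw [mul_comm (2 - τ₂) _, div_mul_eq_mul_div, le_div_iff₀ hun] at h2
        linarith [h2]
      calc lam k ^ 2 * ‖u k‖ ^ 2 = lam k * (lam k * ‖u k‖ ^ 2) := by ring
        _ ≤ lam k * ((2 - τ₂) * S k) :=
          mul_le_mul_of_nonneg_left h3 (hlam0 k).le
  have hD : ∀ (p : X), (∀ i, T i p = p) → ∀ k,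
      ‖x (k+1) - p‖ ^ 2 ≤ ‖x k - p‖ ^ 2 - lam k * τ₂ * S k := by
    intro p hp k
    have hxk : x (k+1) - p = (x k - p) + lam k • u k := by
      rw [hx k]
      simp only [hudef]
      abel
    rw [hxk, norm_add_sq_real]
    have hip : ⟪x k - p, lam k • u k⟫ = lam k * ⟪u k, x k - p⟫ := by
      rw [real_inner_smul_right, real_inner_comm]
    have hinner : ⟪u k, x k - p⟫ ≤ -S k := by
      have h := hA p hp k
      have e : ⟪u k, x k - p⟫ = -⟪u k, p - x k⟫ := by
        rw [← inner_neg_right]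
        congr 1
        abel
      rw [e]
      linarith
    have hsq : ‖lam k • u k‖ ^ 2 = lam k ^ 2 * ‖u k‖ ^ 2 := by
      rw [norm_smul, mul_pow, Real.norm_eq_abs, sq_abs]
    rw [hip, hsq]
    have h5 : lam k * ⟪u k, x k - p⟫ ≤ lam k * (-S k) :=
      mul_le_mul_of_nonneg_left hinner (hlam0 k).le
    have := hkey k
    nlinarith [this, h5]
  have hanti : ∀ (p : X), (∀ i, T i p = p) → Antitone (fun k => ‖x k - p‖ ^ 2) := by
    intro p hp
    apply antitone_nat_of_succ_le
    intro k
    have h := hD p hp k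
    have h0 : 0 ≤ lam k * τ₂ * S k :=
      mul_nonneg (mul_nonneg (hlam0 k).le hτ₂0.le) (hS0 k)
    simpa using le_trans h (by linarith)
  have hsqrt : ∀ (f : ℕ → ℝ), (∀ k, 0 ≤ f k) →
      Tendsto (fun k => f k ^ 2) atTop (𝓝 0) → Tendsto f atTop (𝓝 0) := by
    intro f hf h
    have h2 := (Real.continuous_sqrt.tendsto 0).comp h
    have e : (fun k => Real.sqrt (f k ^ 2)) = f := funext fun k => Real.sqrt_sq (hf k)
    rw [Real.sqrt_zero] at h2
    rw [← e]
    exact h2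
  set a : ℕ → ℝ := fun k => ‖x k - q0‖ ^ 2 with hadef
  have haanti : Antitone a := hanti q0 hq0
  have habdd : BddBelow (Set.range a) := ⟨0, fun y ⟨k, hk⟩ => hk ▸ by positivity⟩
  have haconv : Tendsto a atTop (𝓝 (⨅ k, a k)) := tendsto_atTop_ciInf haanti habdd
  have hdiff : Tendsto (fun k => a k - a (k + 1)) atTop (𝓝 0) := by
    have h1 : Tendsto (fun k => a (k + 1)) atTop (𝓝 (⨅ k, a k)) :=
      haconv.comp (tendsto_add_atTop_nat 1)
    have h2 := haconv.sub h1
    simpa using h2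
  have hdec : ∀ k, lam k * τ₂ * S k ≤ a k - a (k + 1) := by
    intro k
    have h1 := hD q0 hq0 k
    simp only [hadef]
    linarith
  have hStend : Tendsto S atTop (𝓝 0) := by
    apply squeeze_zero hS0 (g := fun k => (a k - a (k + 1)) / (τ₁ * τ₂))
    · intro k
      have h2 : τ₁ * τ₂ * S k ≤ lam k * τ₂ * S k :=
        mul_le_mul_of_nonneg_right
          (mul_le_mul_of_nonneg_right (hlam k).1 hτ₂0.le) (hS0 k)
      rw [le_div_iff₀ (by positivity)]
      nlinarith [hdec k, h2]
    · simpa using hdiff.div_const (τ₁ * τ₂)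
  have hstep : Tendsto (fun k => ‖x (k + 1) - x k‖) atTop (𝓝 0) := by
    apply hsqrt _ (fun k => norm_nonneg _)
    apply squeeze_zero (fun k => by positivity)
      (g := fun k => (2 - τ₂) / τ₂ * (a k - a (k + 1)))
    · intro k
      have e1 : x (k + 1) - x k = lam k • u k := by
        rw [hx k]
        simp only [hudef]
        abel
      have e2 : ‖x (k + 1) - x k‖ ^ 2 = lam k ^ 2 * ‖u k‖ ^ 2 := by
        rw [e1, norm_smul, mul_pow, Real.norm_eq_abs, sq_abs]
      rw [e2]
      have h1 := hkey k
      have h2 := hdec k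
      have h4 : (0:ℝ) < 2 - τ₂ := by linarith
      rw [div_mul_eq_mul_div, le_div_iff₀ hτ₂0]
      nlinarith [mul_le_mul_of_nonneg_right h1 hτ₂0.le,
        mul_le_mul_of_nonneg_left h2 h4.le]
    · simpa using hdiff.const_mul ((2 - τ₂) / τ₂)
  have hbound : ∀ k, x k ∈ Metric.closedBall q0 ‖x 0 - q0‖ := by
    intro k
    rw [Metric.mem_closedBall, dist_eq_norm]
    have h : a k ≤ a 0 := haanti (Nat.zero_le k)
    simp only [hadef] at h
    nlinarith [norm_nonneg (x k - q0), norm_nonneg (x 0 - q0)]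
  obtain ⟨z, hzmem, φ, hφ, hφtend⟩ :=
    tendsto_subseq_of_bounded (Metric.isBounded_closedBall) hbound
  have hφat : Tendsto φ atTop atTop := hφ.tendsto_atTop
  have hgap : ∀ (b d : ℕ), ‖x (b + d) - x b‖ ≤
      ∑ r ∈ Finset.range d, ‖x (b + r + 1) - x (b + r)‖ := by
    intro b d
    induction d with
    | zero => simp
    | succ n ih =>
      rw [Finset.sum_range_succ]
      calc ‖x (b + (n + 1)) - x b‖
          ≤ ‖x (b + (n + 1)) - x (b + n)‖ + ‖x (b + n) - x b‖ := by
            rw [← dist_eq_norm, ← dist_eq_norm, ← dist_eq_norm]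
            exact dist_triangle _ _ _
        _ ≤ ∑ r ∈ Finset.range n, ‖x (b + r + 1) - x (b + r)‖
            + ‖x (b + n + 1) - x (b + n)‖ := by
            rw [show b + (n + 1) = b + n + 1 from rfl]
            linarith [ih]
  have hz : ∀ i, T i z = z := by
    intro i
    choose κ hκ1 hκ2 hκ3 using fun j => hint i (φ j)
    have hκat : Tendsto κ atTop atTop := tendsto_atTop_mono
      (fun j => le_trans (hφ.id_le j) (hκ1 j)) tendsto_id
    have hxdiff : Tendsto (fun j => ‖x (κ j) - x (φ j)‖) atTop (𝓝 0) := by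
      have hle : ∀ j, ‖x (κ j) - x (φ j)‖ ≤
          ∑ r ∈ Finset.range s, ‖x (φ j + r + 1) - x (φ j + r)‖ := by
        intro j
        obtain ⟨d, hd⟩ : ∃ d, κ j = φ j + d := ⟨κ j - φ j, by have := hκ1 j; omega⟩
        have hds : d ≤ s := by
          have := hκ2 j
          omega
        rw [hd]
        refine le_trans (hgap (φ j) d) ?_
        exact Finset.sum_le_sum_of_subset_of_nonneg
          (Finset.range_subset_range.mpr hds) (fun r _ _ => norm_nonneg _)
      apply squeeze_zero (fun j => norm_nonneg _) hle
      have h0 : (0:ℝ) = ∑ _r ∈ Finset.range s, (0:ℝ) := by simp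
      rw [h0]
      apply tendsto_finset_sum
      intro r _
      have ht : Tendsto (fun j => φ j + r) atTop atTop :=
        tendsto_atTop_mono (fun j => Nat.le_add_right (φ j) r) hφat
      exact hstep.comp ht
    have hxκ : Tendsto (fun j => x (κ j)) atTop (𝓝 z) := by
      have h := hφtend.add (tendsto_zero_iff_norm_tendsto_zero.mpr hxdiff)
      rw [add_zero] at h
      convert h using 2 with j
      simp [Function.comp]
    have hTi : Tendsto (fun j => ‖T i (x (κ j)) - x (κ j)‖) atTop (𝓝 0) := by
      apply hsqrt _ (fun j => norm_nonneg _)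
      apply squeeze_zero (fun j => by positivity) (g := fun j => S (κ j) / α)
      · intro j
        rw [le_div_iff₀ hα]
        have hterm : w (κ j) i * ‖T i (x (κ j)) - x (κ j)‖ ^ 2 ≤ S (κ j) :=
          Finset.single_le_sum
            (f := fun i' => w (κ j) i' * ‖T i' (x (κ j)) - x (κ j)‖ ^ 2)
            (fun i' _ => mul_nonneg (hw0 (κ j) i') (by positivity))
            (Finset.mem_univ i)
        nlinarith [hκ3 j, sq_nonneg ‖T i (x (κ j)) - x (κ j)‖]
      · simpa using (hStend.comp hκat).div_const α
    have h1 : Tendsto (fun j => T i (x (κ j))) atTop (𝓝 (T i z)) :=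
      ((hTcont i).tendsto z).comp hxκ
    have h2 : Tendsto (fun j => T i (x (κ j))) atTop (𝓝 z) := by
      have h := hxκ.add (tendsto_zero_iff_norm_tendsto_zero.mpr hTi)
      rw [add_zero] at h
      convert h using 2 with j
      abel
    exact tendsto_nhds_unique h1 h2
  refine ⟨z, hz, ?_⟩
  have hbz : Antitone (fun k => ‖x k - z‖ ^ 2) := hanti z hz
  have hbdd2 : BddBelow (Set.range fun k => ‖x k - z‖ ^ 2) :=
    ⟨0, fun y ⟨k, hk⟩ => hk ▸ by positivity⟩
  have hconv2 : Tendsto (fun k => ‖x k - z‖ ^ 2) atTop (𝓝 (⨅ k, ‖x k - z‖ ^ 2)) :=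
    tendsto_atTop_ciInf hbz hbdd2
  have hsub : Tendsto (fun j => ‖x (φ j) - z‖ ^ 2) atTop (𝓝 0) := by
    have h1 : Tendsto (fun j => x (φ j) - z) atTop (𝓝 0) := by
      have := hφtend.sub (tendsto_const_nhds (x := z))
      simpa [Function.comp] using this
    have h2 := (h1.norm).pow 2
    simpa using h2
  have hsub2 : Tendsto (fun j => ‖x (φ j) - z‖ ^ 2) atTop
      (𝓝 (⨅ k, ‖x k - z‖ ^ 2)) := hconv2.comp hφat
  have hinf0 : (⨅ k, ‖x k - z‖ ^ 2) = 0 := tendsto_nhds_unique hsub2 hsub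
  rw [hinf0] at hconv2
  have hnorm : Tendsto (fun k => ‖x k - z‖) atTop (𝓝 0) :=
    hsqrt _ (fun k => norm_nonneg _) hconv2
  have := tendsto_zero_iff_norm_tendsto_zero.mpr hnorm
  have hfin := this.add (tendsto_const_nhds (x := z))
  rw [zero_add] at hfin
  convert hfin using 2 with k
  abel
end
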